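/- If V : ℕ → ℝ has non-decreasing differences (V(x₁+z) − V(x₁) ≥ V(x₂+z) − V(x₂) for all z > 0 and x₁ > x₂ ≥ 0) and is non-decreasing, then the function h(x) = E[V(x − D + ς)] − E[V(x − D)] is non-decreasing in x, where D is the truncated mixture-binomial departure count given state x and ς is Bernoulli(p) independent of D. In particular h(x+1) ≥ h(x) for all x ≥ 0. -/
import Mathlib


noncomputable def mixP (M : ℕ) (q r r' : ℝ) (d : ℕ) : ℝ :=
  (M.choose d : ℝ) * (r ^ d * (1 - r) ^ (M - d) * q + r' ^ d * (1 - r') ^ (M - d) * (1 - q))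

noncomputable def Pd (M : ℕ) (q r r' : ℝ) (x d : ℕ) : ℝ :=
  if d < min x M then mixP M q r r' d
  else if d = min x M then ∑ e ∈ Finset.Icc (min x M) M, mixP M q r r' e
  else 0

/-- Expected marginal value of admitting an arrival in state `x`:
`h(x) = E[V(x − D + ς)] − E[V(x − D)]`, where `D ~ Pd(x)` and
`ς ~ Bernoulli(p)` independent. -/
noncomputable def hFun (M : ℕ) (q r r' p : ℝ) (V : ℕ → ℝ) (x : ℕ) : ℝ :=
  (∑ d ∈ Finset.range (min x M + 1),
      Pd M q r r' x d * (p * V (x - d + 1) + (1 - p) * V (x - d)))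
  - ∑ d ∈ Finset.range (min x M + 1), Pd M q r r' x d * V (x - d)

lemma mixP_nonneg (M : ℕ) (q r r' : ℝ) (hq0 : 0 ≤ q) (hq1 : q ≤ 1)
    (hr0 : 0 ≤ r) (hr1 : r ≤ 1) (hr'0 : 0 ≤ r') (hr'1 : r' ≤ 1) (d : ℕ) :
    0 ≤ mixP M q r r' d := by
  unfold mixP
  have h1 : (0:ℝ) ≤ 1 - r := by linarith
  have h2 : (0:ℝ) ≤ 1 - r' := by linarith
  have h3 : (0:ℝ) ≤ 1 - q := by linarith
  positivity

lemma Pd_nonneg (M : ℕ) (q r r' : ℝ) (hq0 : 0 ≤ q) (hq1 : q ≤ 1)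
    (hr0 : 0 ≤ r) (hr1 : r ≤ 1) (hr'0 : 0 ≤ r') (hr'1 : r' ≤ 1) (x d : ℕ) :
    0 ≤ Pd M q r r' x d := by
  unfold Pd
  split_ifs
  · exact mixP_nonneg M q r r' hq0 hq1 hr0 hr1 hr'0 hr'1 d
  · exact Finset.sum_nonneg fun e _ => mixP_nonneg M q r r' hq0 hq1 hr0 hr1 hr'0 hr'1 e
  · exact le_refl 0

lemma hFun_eq (M : ℕ) (q r r' p : ℝ) (V : ℕ → ℝ) (x : ℕ) :
    hFun M q r r' p V x
      = ∑ d ∈ Finset.range (min x M + 1),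
          Pd M q r r' x d * (p * (V (x - d + 1) - V (x - d))) := by
  unfold hFun
  rw [← Finset.sum_sub_distrib]
  exact Finset.sum_congr rfl fun d _ => by ring

/-- If `V` is non-decreasing and has non-decreasing differences, then the
marginal value `h` of admitting an arrival is non-decreasing in the state:
`h(x+1) ≥ h(x)` for all `x`. -/
theorem marginal_value_nondecreasing
    (M : ℕ) (hM : 1 ≤ M)
    (q r r' p : ℝ) (hq0 : 0 ≤ q) (hq1 : q ≤ 1) (hr0 : 0 ≤ r) (hr1 : r ≤ 1)
    (hr'0 : 0 ≤ r') (hr'1 : r' ≤ 1) (hp0 : 0 ≤ p) (hp1 : p ≤ 1)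
    (V : ℕ → ℝ) (hVmono : Monotone V)
    (hndd : ∀ z x₁ x₂ : ℕ, 0 < z → x₂ < x₁ →
      V (x₂ + z) - V x₂ ≤ V (x₁ + z) - V x₁) :
    ∀ x : ℕ, hFun M q r r' p V x ≤ hFun M q r r' p V (x + 1) := by
  have hg : ∀ a b : ℕ, a ≤ b → V (a + 1) - V a ≤ V (b + 1) - V b := by
    intro a b hab
    rcases eq_or_lt_of_le hab with h | h
    · subst h; exact le_refl _
    · exact hndd 1 b a one_pos h
  have hPd := Pd_nonneg M q r r' hq0 hq1 hr0 hr1 hr'0 hr'1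
  have hmix := mixP_nonneg M q r r' hq0 hq1 hr0 hr1 hr'0 hr'1
  intro x
  rw [hFun_eq, hFun_eq]
  by_cases hx : M ≤ x
  · -- min x M = M = min (x+1) M
    have h1 : min x M = M := min_eq_right hx
    have h2 : min (x + 1) M = M := min_eq_right (le_trans hx (Nat.le_succ x))
    have hPeq : ∀ d, Pd M q r r' x d = Pd M q r r' (x + 1) d := by
      intro d; unfold Pd; rw [h1, h2]
    rw [h1, h2]
    apply Finset.sum_le_sum
    intro d _
    rw [hPeq d]
    apply mul_le_mul_of_nonneg_left _ (hPd (x + 1) d)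
    apply mul_le_mul_of_nonneg_left _ hp0
    exact hg _ _ (Nat.sub_le_sub_right (Nat.le_succ x) d)
  · push_neg at hx
    have h1 : min x M = x := min_eq_left (le_of_lt hx)
    have h2 : min (x + 1) M = x + 1 := min_eq_left hx
    rw [h1, h2]
    rw [Finset.sum_range_succ, Finset.sum_range_succ (n := x + 1), Finset.sum_range_succ (n := x)]
    have hPx : ∀ d, d < x → Pd M q r r' x d = mixP M q r r' d := by
      intro d hd; unfold Pd; rw [h1]; rw [if_pos hd]
    have hPx1 : ∀ d, d < x + 1 → Pd M q r r' (x + 1) d = mixP M q r r' d := by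
      intro d hd; unfold Pd; rw [h2]; rw [if_pos hd]
    have hPxx : Pd M q r r' x x = ∑ e ∈ Finset.Icc x M, mixP M q r r' e := by
      unfold Pd; rw [h1]; simp
    have hPxx1 : Pd M q r r' (x + 1) (x + 1)
        = ∑ e ∈ Finset.Icc (x + 1) M, mixP M q r r' e := by
      unfold Pd; rw [h2]; simp
    have hT : ∑ e ∈ Finset.Icc x M, mixP M q r r' e
        = mixP M q r r' x + ∑ e ∈ Finset.Icc (x + 1) M, mixP M q r r' e := by
      rw [Finset.Icc_eq_cons_Ioc (le_of_lt hx), Finset.sum_cons, ← Finset.Icc_add_one_left_eq_Ioc]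
    rw [hPxx, hPxx1, hPx1 x (Nat.lt_succ_self x), hT]
    have hsum : ∑ d ∈ Finset.range x, Pd M q r r' x d * (p * (V (x - d + 1) - V (x - d)))
        ≤ ∑ d ∈ Finset.range x,
            Pd M q r r' (x + 1) d * (p * (V (x + 1 - d + 1) - V (x + 1 - d))) := by
      apply Finset.sum_le_sum
      intro d hd
      have hdx : d < x := Finset.mem_range.mp hd
      rw [hPx d hdx, hPx1 d (Nat.lt_succ_of_lt hdx)]
      apply mul_le_mul_of_nonneg_left _ (hmix d)
      apply mul_le_mul_of_nonneg_left _ hp0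
      exact hg _ _ (Nat.sub_le_sub_right (Nat.le_succ x) d)
    have hxx : x - x = 0 := Nat.sub_self x
    have hxx1 : x + 1 - x = 1 := by omega
    have hxx2 : x + 1 - (x + 1) = 0 := by omega
    rw [hxx, hxx1, hxx2]
    have hg01 : V (0 + 1) - V 0 ≤ V (1 + 1) - V 1 := hg 0 1 (by norm_num)
    have hmx : 0 ≤ mixP M q r r' x := hmix x
    nlinarith [mul_le_mul_of_nonneg_left hg01 hp0,
      mul_le_mul_of_nonneg_left (mul_le_mul_of_nonneg_left hg01 hp0) hmx]
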